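/- arXiv:2308.10004 — 4 statements merged into one kernel-verified Lean document; each statement's English description precedes it below -/
import Mathlib

section
/- Let d ≥ 2 be an integer and let s, p, p̃ ∈ [1,∞), s̃ ∈ (1,∞) be reals with 1/s̃ > 1 − 1/s and 1/(s·p̃) > (1 + 1/(d−1) − 1/p)·(1 − 1/s̃). Let s̄ ∈ [1, s) and let m̄, k ∈ ℕ satisfy m̄ < s/s̄ − 1 − (d−1)·max(0, 1 − (s/s̄)(1 − 1/p)) and k < (s − 1) + 1 − (d−1)(1 − 1/p)·max(0, 1 − (s − 1)). Then there exist reals α, β, γ > 0 such that: (i) (α+1)·m̄ + (d−1)/p + β/s − β/s̄ < 0; (ii) α + 1 + (d−1)(1 − 1/p) − (d−1)/p̃ + β(1 − 1/s) − β/s̃ < 0; (iii) γ + β/s < α + 1 + (d−1)(1 − 1/p); (iv) (α+1)(k−1) − (d−1)(1 − 1/p) − β(1 − 1/s) < 0. -/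
set_option maxHeartbeats 1000000


theorem statement6 (d : ℕ) (hd : 2 ≤ d)
    (s p ptil stil : ℝ) (hs : 1 ≤ s) (hp : 1 ≤ p) (hpt : 1 ≤ ptil) (hst : 1 < stil)
    (hconj : 1 / stil > 1 - 1 / s)
    (hmain : 1 / (s * ptil) > (1 + 1 / ((d : ℝ) - 1) - 1 / p) * (1 - 1 / stil))
    (sbar : ℝ) (hsbar : 1 ≤ sbar) (hsbars : sbar < s) (mbar k : ℕ)
    (hm : (mbar : ℝ) < s / sbar - 1
        - ((d : ℝ) - 1) * max 0 (1 - (s / sbar) * (1 - 1 / p)))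
    (hk : (k : ℝ) < (s - 1) + 1 - ((d : ℝ) - 1) * (1 - 1 / p) * max 0 (1 - (s - 1))) :
    ∃ α β γ : ℝ, 0 < α ∧ 0 < β ∧ 0 < γ ∧
      (α + 1) * (mbar : ℝ) + ((d : ℝ) - 1) / p + β / s - β / sbar < 0 ∧
      α + 1 + ((d : ℝ) - 1) * (1 - 1 / p) - ((d : ℝ) - 1) / ptil
          + β * (1 - 1 / s) - β / stil < 0 ∧
      γ + β / s < α + 1 + ((d : ℝ) - 1) * (1 - 1 / p) ∧
      (α + 1) * ((k : ℝ) - 1) - ((d : ℝ) - 1) * (1 - 1 / p) - β * (1 - 1 / s) < 0 := by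
  have hs1 : 1 < s := lt_of_le_of_lt hsbar hsbars
  have hs0 : 0 < s := by linarith
  have hsbar0 : 0 < sbar := by linarith
  have hp0 : 0 < p := by linarith
  have hpt0 : 0 < ptil := by linarith
  have hst0 : 0 < stil := by linarith
  have hD1 : (1:ℝ) ≤ (d:ℝ) - 1 := by
    have h2 : (2:ℝ) ≤ (d:ℝ) := by exact_mod_cast hd
    linarith
  set D : ℝ := (d:ℝ) - 1 with hDdef
  have hD0 : 0 < D := by linarith
  have hp1 : 1/p ≤ 1 := by rw [div_le_one hp0]; exact hp
  have hpi0 : 0 < 1/p := by positivity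
  set E : ℝ := D * (1 - 1/p) with hEdef
  have hE0 : 0 ≤ E := mul_nonneg hD0.le (by linarith)
  set r : ℝ := s / sbar with hrdef
  have hr1 : 1 < r := (one_lt_div hsbar0).mpr hsbars
  set δ₁ : ℝ := 1/sbar - 1/s with hd1def
  have hδ1 : 0 < δ₁ := by
    rw [hd1def]
    have := one_div_lt_one_div_of_lt hsbar0 hsbars
    linarith
  set δ₃ : ℝ := 1 - 1/s with hd3def
  have hδ3 : 0 < δ₃ := by
    rw [hd3def]
    have : 1/s < 1 := by rw [div_lt_one hs0]; exact hs1
    linarith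
  set δ₂ : ℝ := 1/stil - δ₃ with hd2def
  have hδ2 : 0 < δ₂ := by rw [hd2def]; linarith [hconj]
  set M : ℝ := s * (1 + E) with hMdef
  have hM0 : 0 < M := by rw [hMdef]; apply mul_pos hs0; linarith
  -- K1
  have eMd1 : M * δ₁ = (r - 1) * (1 + E) := by
    rw [hMdef, hd1def, hrdef, hEdef]
    field_simp
  have hmax1 : D * (1 - r * (1 - 1/p)) ≤ D * max 0 (1 - r * (1 - 1/p)) :=
    mul_le_mul_of_nonneg_left (le_max_right _ _) hD0.le
  have K1 : (mbar:ℝ) + D/p < M * δ₁ := by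
    have h' : (mbar:ℝ) < r - 1 - D * (1 - r * (1 - 1/p)) := by linarith [hm, hmax1]
    have expand : (r - 1) * (1 + D * (1 - 1/p))
        = (r - 1 - D * (1 - r * (1 - 1/p))) + D/p := by ring
    rw [eMd1, hEdef, expand]
    linarith [h']
  -- K2
  have hsD : 0 < s * D := mul_pos hs0 hD0
  have h2 := mul_lt_mul_of_pos_left hmain hsD
  have e21 : s * D * (1/(s*ptil)) = D / ptil := by
    field_simp
  have e22 : s * D * ((1 + 1/D - 1/p) * (1 - 1/stil)) = s * (1 + E) * (1 - 1/stil) := by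
    rw [hEdef]
    field_simp
    ring
  have eMd2 : M * δ₂ = (1 + E) - s * (1 + E) * (1 - 1/stil) := by
    rw [hMdef, hd2def, hd3def]
    field_simp
    ring
  have K2 : 1 + E - D/ptil < M * δ₂ := by
    rw [e21, e22] at h2
    rw [eMd2]
    linarith
  -- K3
  have hks : (k:ℝ) < s := by
    have h0 : 0 ≤ E * max 0 (1 - (s-1)) := mul_nonneg hE0 (le_max_left _ _)
    linarith [hk]
  have eMd3 : M * δ₃ = (s - 1) * (1 + E) := by
    rw [hMdef, hd3def]
    field_simp
  have K3 : (k:ℝ) - 1 - E < M * δ₃ := by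
    rw [eMd3]
    nlinarith [mul_nonneg hE0 hs0.le]
  -- choose β
  set L : ℝ := max 0 (max (((mbar:ℝ) + D/p)/δ₁)
      (max ((1 + E - D/ptil)/δ₂) (((k:ℝ) - 1 - E)/δ₃))) with hLdef
  have hL0 : 0 ≤ L := by rw [hLdef]; exact le_max_left _ _
  have hLM : L < M := by
    rw [hLdef]
    apply max_lt hM0
    apply max_lt ((div_lt_iff₀ hδ1).mpr K1)
    exact max_lt ((div_lt_iff₀ hδ2).mpr K2) ((div_lt_iff₀ hδ3).mpr K3)
  set β : ℝ := (L + M)/2 with hβdef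
  have hβ0 : 0 < β := by rw [hβdef]; linarith
  have hβM : β < M := by rw [hβdef]; linarith
  have hLβ : L < β := by rw [hβdef]; linarith
  have hβ1 : (mbar:ℝ) + D/p < β * δ₁ := by
    have t : ((mbar:ℝ) + D/p)/δ₁ < β :=
      lt_of_le_of_lt ((le_max_left _ _).trans (le_max_right 0 _)) hLβ
    exact (div_lt_iff₀ hδ1).mp t
  have hβ2 : 1 + E - D/ptil < β * δ₂ := by
    have t : (1 + E - D/ptil)/δ₂ < β :=
      lt_of_le_of_lt (((le_max_left _ _).trans (le_max_right _ _)).trans (le_max_right 0 _)) hLβ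
    exact (div_lt_iff₀ hδ2).mp t
  have hβ3 : (k:ℝ) - 1 - E < β * δ₃ := by
    have t : ((k:ℝ) - 1 - E)/δ₃ < β :=
      lt_of_le_of_lt (((le_max_right _ _).trans (le_max_right _ _)).trans (le_max_right 0 _)) hLβ
    exact (div_lt_iff₀ hδ3).mp t
  have hβs : β / s < 1 + E := by
    rw [div_lt_iff₀ hs0]
    calc β < M := hβM
    _ = (1 + E) * s := by rw [hMdef]; ring
  set γ : ℝ := (1 + E - β/s)/2 with hγdef
  have hγ0 : 0 < γ := by rw [hγdef]; linarith
  -- choose ε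
  have hm1 : (0:ℝ) < (mbar:ℝ) + 1 := by positivity
  have hk1 : (0:ℝ) < (k:ℝ) + 1 := by positivity
  have hσ1 : 0 < β * δ₁ - ((mbar:ℝ) + D/p) := by linarith
  have hσ2 : 0 < β * δ₂ - (1 + E - D/ptil) := by linarith
  have hσ3 : 0 < β * δ₃ - ((k:ℝ) - 1 - E) := by linarith
  set ε : ℝ := min ((β * δ₁ - ((mbar:ℝ) + D/p))/((mbar:ℝ) + 1))
      (min ((β * δ₂ - (1 + E - D/ptil))/2) ((β * δ₃ - ((k:ℝ) - 1 - E))/((k:ℝ) + 1))) with hεdef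
  have hε0 : 0 < ε := by
    rw [hεdef]
    exact lt_min (div_pos hσ1 hm1) (lt_min (div_pos hσ2 (by norm_num)) (div_pos hσ3 hk1))
  have hε1 : ε * ((mbar:ℝ) + 1) ≤ β * δ₁ - ((mbar:ℝ) + D/p) :=
    (le_div_iff₀ hm1).mp (min_le_left _ _)
  have hε2 : ε ≤ (β * δ₂ - (1 + E - D/ptil))/2 :=
    (min_le_right _ _).trans (min_le_left _ _)
  have hε4 : ε * ((k:ℝ) + 1) ≤ β * δ₃ - ((k:ℝ) - 1 - E) :=
    (le_div_iff₀ hk1).mp ((min_le_right _ _).trans (min_le_right _ _))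
  refine ⟨ε, β, γ, hε0, hβ0, hγ0, ?_, ?_, ?_, ?_⟩
  · have i1 : β * δ₁ = β/sbar - β/s := by rw [hd1def]; ring
    have e : (ε + 1) * (mbar:ℝ) = ε * ((mbar:ℝ) + 1) - ε + (mbar:ℝ) := by ring
    linarith [hε1, hε0]
  · have i2 : β * δ₂ = β/stil - β * δ₃ := by rw [hd2def]; ring
    linarith [hε2, hβ2, hσ2]
  · linarith [hβs, hε0]
  · have e : (ε + 1) * ((k:ℝ) - 1) = ε * ((k:ℝ) + 1) - 2*ε + ((k:ℝ) - 1) := by ring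
    linarith [hε4, hε0]
end

section
/- Let d ≥ 2 be an integer and let s, p, p̃ ∈ [1,∞) be reals. Let s̄ ∈ [1, s) and let m̄, k ∈ ℕ satisfy m̄ < s/s̄ − 1 and k < s. Then there exist reals α, β, γ > 0 such that: (i) (α+1)·m̄ + (d−1)/p + β/s − β/s̄ < 0; (ii) α + 1 + (d−1)(1 − 1/p) − (d−1)/p̃ + β(1 − 1/s) − β < 0; (iii) γ + β/s < α + 1 + (d−1)(1 − 1/p); (iv) (α+1)(k−1) − (d−1)(1 − 1/p) − β(1 − 1/s) < 0. -/
/-!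
Write `q = (d-1)(1-1/p)`, `e = (d-1)/p̃ > 0`, and tie `β` to `α` by `β/s = α + 1 + q - e/2`.
Then (ii) reads `-e/2 < 0` and (iii) holds with `γ = e/4`, while (i) and (iv) become affine
inequalities in `α` whose slopes are `m̄ < s/s̄ - 1` and `k - 1 < s - 1` respectively;
hence they, together with `α > 0` and `β > 0`, hold for every sufficiently large `α`.
-/

open Filter

theorem eventually_mul_add_lt_mul_add {𝕜 : Type*} [Field 𝕜] [LinearOrder 𝕜]
    [IsStrictOrderedRing 𝕜] {u v : 𝕜} (h : u < v) (x y : 𝕜) :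
    ∀ᶠ a in atTop, u * a + x < v * a + y := by
  filter_upwards [eventually_gt_atTop ((x - y) / (v - u))] with a ha
  rw [div_lt_iff₀ (sub_pos.2 h)] at ha
  linarith

theorem statement7_general (d : ℕ) (hd : 2 ≤ d)
    (s p ptil : ℝ) (hpt : 1 ≤ ptil)
    (sbar : ℝ) (mbar k : ℕ)
    (hm : (mbar : ℝ) < s / sbar - 1) (hk : (k : ℝ) < s) :
    ∃ α β γ : ℝ, 0 < α ∧ 0 < β ∧ 0 < γ ∧
      (α + 1) * (mbar : ℝ) + ((d : ℝ) - 1) / p + β / s - β / sbar < 0 ∧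
      α + 1 + ((d : ℝ) - 1) * (1 - 1 / p) - ((d : ℝ) - 1) / ptil
          + β * (1 - 1 / s) - β < 0 ∧
      γ + β / s < α + 1 + ((d : ℝ) - 1) * (1 - 1 / p) ∧
      (α + 1) * ((k : ℝ) - 1) - ((d : ℝ) - 1) * (1 - 1 / p) - β * (1 - 1 / s) < 0 := by
  have hs : 0 < s := (Nat.cast_nonneg k).trans_lt hk
  set q := ((d : ℝ) - 1) * (1 - 1 / p)
  set e := ((d : ℝ) - 1) / ptil
  have he : 0 < e := by
    have : (2 : ℝ) ≤ d := by exact_mod_cast hd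
    exact div_pos (by linarith) (by linarith)
  have hb (α : ℝ) : s * (α + 1 + q - e / 2) / s = α + 1 + q - e / 2 :=
    mul_div_cancel_left₀ _ hs.ne'
  have hβ := eventually_mul_add_lt_mul_add zero_lt_one 0 (1 + q - e / 2)
  have hi :=
    eventually_mul_add_lt_mul_add hm (mbar + (d - 1) / p) ((s / sbar - 1) * (1 + q - e / 2))
  have hiv :=
    eventually_mul_add_lt_mul_add (sub_lt_sub_right hk 1) (k - 1 - q) ((s - 1) * (1 + q - e / 2))
  obtain ⟨α, hα, hβ, hi, hiv⟩ :=
    ((eventually_gt_atTop 0).and <| hβ.and <| hi.and hiv).exists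
  refine ⟨α, s * (α + 1 + q - e / 2), e / 4, hα, mul_pos hs (by linarith), by positivity,
    ?_, ?_, ?_, ?_⟩
  · rw [hb, mul_div_right_comm]
    linear_combination hi
  · rw [mul_one_sub, mul_one_div, hb]
    linear_combination he / 2
  · rw [hb]
    linear_combination he / 4
  · rw [mul_one_sub, mul_one_div, hb]
    linear_combination hiv

theorem statement7 (d : ℕ) (hd : 2 ≤ d)
    (s p ptil : ℝ) (hs : 1 ≤ s) (hp : 1 ≤ p) (hpt : 1 ≤ ptil)
    (sbar : ℝ) (hsbar : 1 ≤ sbar) (hsbars : sbar < s) (mbar k : ℕ)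
    (hm : (mbar : ℝ) < s / sbar - 1) (hk : (k : ℝ) < s) :
    ∃ α β γ : ℝ, 0 < α ∧ 0 < β ∧ 0 < γ ∧
      (α + 1) * (mbar : ℝ) + ((d : ℝ) - 1) / p + β / s - β / sbar < 0 ∧
      α + 1 + ((d : ℝ) - 1) * (1 - 1 / p) - ((d : ℝ) - 1) / ptil
          + β * (1 - 1 / s) - β < 0 ∧
      γ + β / s < α + 1 + ((d : ℝ) - 1) * (1 - 1 / p) ∧
      (α + 1) * ((k : ℝ) - 1) - ((d : ℝ) - 1) * (1 - 1 / p) - β * (1 - 1 / s) < 0 :=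
  statement7_general d hd s p ptil hpt sbar mbar k hm hk
end

section
/- Let d ≥ 1 be an integer, let Φ : ℝ^d → ℝ^d be a smooth map with det DΦ(x) = 1 for every x ∈ ℝ^d, and let G : ℝ^d → ℝ^d be a smooth vector field. Then the smooth vector field V(x) := (DΦ(x))^{-1} · G(Φ(x)) satisfies, at every point x ∈ ℝ^d, div V(x) = (div G)(Φ(x)). -/
open Matrix

noncomputable section

/-- divergence of a vector field on `ℝ^d`. -/
def divg (d : ℕ) (F : (Fin d → ℝ) → (Fin d → ℝ)) (x : Fin d → ℝ) : ℝ :=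
  ∑ j, fderiv ℝ F x (Pi.single j 1) j

/-- the Jacobian matrix `DΦ(x)`. -/
def jac {d : ℕ} (Φ : (Fin d → ℝ) → (Fin d → ℝ)) (x : Fin d → ℝ) :
    Matrix (Fin d) (Fin d) ℝ :=
  Matrix.of fun i j => fderiv ℝ Φ x (Pi.single j 1) i

end


variable {d : ℕ} {Φ : (Fin d → ℝ) → (Fin d → ℝ)}

-- evaluation CLM
noncomputable def evalCLM (k l : Fin d) :
    ((Fin d → ℝ) →L[ℝ] (Fin d → ℝ)) →L[ℝ] ℝ :=
  (ContinuousLinearMap.proj k).comp (ContinuousLinearMap.apply ℝ (Fin d → ℝ) (Pi.single l 1))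

lemma evalCLM_apply (k l : Fin d) (L : (Fin d → ℝ) →L[ℝ] (Fin d → ℝ)) :
    evalCLM k l L = L (Pi.single l 1) k := rfl

lemma hasFDerivAt_entry (hΦ : ContDiff ℝ (⊤ : ℕ∞) Φ) (x : Fin d → ℝ) (k l : Fin d) :
    HasFDerivAt (fun y => jac Φ y k l)
      ((evalCLM k l).comp (fderiv ℝ (fderiv ℝ Φ) x)) x := by
  have h1 : HasFDerivAt (fderiv ℝ Φ) (fderiv ℝ (fderiv ℝ Φ) x) x :=
    (((hΦ.fderiv_right (m := (⊤ : ℕ∞)) (by simp)).differentiable (by simp)) x).hasFDerivAt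
  exact (evalCLM k l).hasFDerivAt.comp x h1

lemma differentiableAt_entry (hΦ : ContDiff ℝ (⊤ : ℕ∞) Φ) (x : Fin d → ℝ) (k l : Fin d) :
    DifferentiableAt ℝ (fun y => jac Φ y k l) x :=
  (hasFDerivAt_entry hΦ x k l).differentiableAt

lemma inv_eq_adj (hdet : ∀ x, (jac Φ x).det = 1) (y : Fin d → ℝ) :
    (jac Φ y)⁻¹ = (jac Φ y).adjugate := by
  apply Matrix.inv_eq_right_inv
  rw [Matrix.mul_adjugate, hdet, one_smul]

lemma mulJA (hdet : ∀ x, (jac Φ x).det = 1) (y : Fin d → ℝ) :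
    jac Φ y * (jac Φ y)⁻¹ = 1 :=
  Matrix.mul_nonsing_inv _ (by rw [hdet]; exact isUnit_one)

lemma mulAJ (hdet : ∀ x, (jac Φ x).det = 1) (y : Fin d → ℝ) :
    (jac Φ y)⁻¹ * jac Φ y = 1 :=
  Matrix.nonsing_inv_mul _ (by rw [hdet]; exact isUnit_one)

lemma differentiableAt_prod {ι : Type*} {E : Type*} [NormedAddCommGroup E]
    [NormedSpace ℝ E] {f : ι → E → ℝ} {u : Finset ι} {x : E}
    (h : ∀ i ∈ u, DifferentiableAt ℝ (f i) x) :
    DifferentiableAt ℝ (fun y => ∏ i ∈ u, f i y) x := by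
  classical
  induction u using Finset.induction with
  | empty => simp
  | insert a s hni ih =>
    simp only [Finset.prod_insert hni]
    exact (h _ (Finset.mem_insert_self _ _)).mul
      (ih fun i hi => h i (Finset.mem_insert_of_mem hi))

lemma differentiableAt_inv_entry (hΦ : ContDiff ℝ (⊤ : ℕ∞) Φ)
    (hdet : ∀ x, (jac Φ x).det = 1) (x : Fin d → ℝ) (i j : Fin d) :
    DifferentiableAt ℝ (fun y => (jac Φ y)⁻¹ i j) x := by
  have : (fun y => (jac Φ y)⁻¹ i j)
      = fun y => ∑ σ : Equiv.Perm (Fin d),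
          (Equiv.Perm.sign σ : ℝ) *
            ∏ p, ((jac Φ y).updateRow j (Pi.single i 1)) (σ p) p := by
    funext y
    rw [inv_eq_adj hdet, Matrix.adjugate_apply, Matrix.det_apply]
    simp [Units.smul_def, zsmul_eq_mul]
  rw [this]
  apply DifferentiableAt.fun_sum
  intro σ _
  apply DifferentiableAt.const_mul
  apply differentiableAt_prod
  intro p _
  rcases eq_or_ne (σ p) j with h | h
  · simpa [Matrix.updateRow_apply, h] using differentiableAt_const _
  · simpa [Matrix.updateRow_apply, h] using differentiableAt_entry hΦ x (σ p) p

lemma eq1 (hΦ : ContDiff ℝ (⊤ : ℕ∞) Φ) (hdet : ∀ x, (jac Φ x).det = 1)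
    (x : Fin d → ℝ) (i j : Fin d) (v : Fin d → ℝ) :
    ∑ k, (jac Φ x)⁻¹ k j * fderiv ℝ (fderiv ℝ Φ) x v (Pi.single k 1) i
      + ∑ k, jac Φ x i k * fderiv ℝ (fun y => (jac Φ y)⁻¹ k j) x v = 0 := by
  have hconst : (fun y => ∑ k, jac Φ y i k * (jac Φ y)⁻¹ k j)
      = fun _ => (1 : Matrix (Fin d) (Fin d) ℝ) i j := by
    funext y
    rw [← Matrix.mul_apply, mulJA hdet]
  have h0 : fderiv ℝ (fun y => ∑ k, jac Φ y i k * (jac Φ y)⁻¹ k j) x = 0 := by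
    rw [hconst]; exact fderiv_const_apply _
  have hsum : fderiv ℝ (fun y => ∑ k, jac Φ y i k * (jac Φ y)⁻¹ k j) x
      = ∑ k, (jac Φ x i k • fderiv ℝ (fun y => (jac Φ y)⁻¹ k j) x
          + (jac Φ x)⁻¹ k j • fderiv ℝ (fun y => jac Φ y i k) x) := by
    rw [fderiv_fun_sum fun k _ =>
      (differentiableAt_entry hΦ x i k).fun_mul (differentiableAt_inv_entry hΦ hdet x k j)]
    exact Finset.sum_congr rfl fun k _ =>
      fderiv_fun_mul (differentiableAt_entry hΦ x i k) (differentiableAt_inv_entry hΦ hdet x k j)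
  have := congrFun (congrArg DFunLike.coe (h0.symm.trans hsum)) v
  simp only [ContinuousLinearMap.zero_apply, ContinuousLinearMap.sum_apply,
    ContinuousLinearMap.add_apply, ContinuousLinearMap.smul_apply, smul_eq_mul] at this
  have hJd : ∀ k, fderiv ℝ (fun y => jac Φ y i k) x v
      = fderiv ℝ (fderiv ℝ Φ) x v (Pi.single k 1) i := by
    intro k
    rw [(hasFDerivAt_entry hΦ x i k).fderiv]
    rfl
  simp only [hJd] at this
  rw [Finset.sum_add_distrib] at this
  rw [add_comm] at this
  exact this.symm

lemma da_formula (hΦ : ContDiff ℝ (⊤ : ℕ∞) Φ) (hdet : ∀ x, (jac Φ x).det = 1)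
    (x : Fin d → ℝ) (p j : Fin d) (v : Fin d → ℝ) :
    fderiv ℝ (fun y => (jac Φ y)⁻¹ p j) x v
      = -∑ i, ∑ k, (jac Φ x)⁻¹ p i *
          ((jac Φ x)⁻¹ k j * fderiv ℝ (fderiv ℝ Φ) x v (Pi.single k 1) i) := by
  have h := fun i => eq1 hΦ hdet x i j v
  have h2 : ∑ i, (jac Φ x)⁻¹ p i *
      (∑ k, (jac Φ x)⁻¹ k j * fderiv ℝ (fderiv ℝ Φ) x v (Pi.single k 1) i
        + ∑ k, jac Φ x i k * fderiv ℝ (fun y => (jac Φ y)⁻¹ k j) x v) = 0 := by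
    simp only [h, mul_zero, Finset.sum_const_zero]
  simp only [mul_add, Finset.sum_add_distrib, Finset.mul_sum] at h2
  have h3 : ∑ i, ∑ k, (jac Φ x)⁻¹ p i *
      (jac Φ x i k * fderiv ℝ (fun y => (jac Φ y)⁻¹ k j) x v)
      = fderiv ℝ (fun y => (jac Φ y)⁻¹ p j) x v := by
    rw [Finset.sum_comm]
    have : ∀ k, ∑ i, (jac Φ x)⁻¹ p i *
        (jac Φ x i k * fderiv ℝ (fun y => (jac Φ y)⁻¹ k j) x v)
        = ((jac Φ x)⁻¹ * jac Φ x) p k * fderiv ℝ (fun y => (jac Φ y)⁻¹ k j) x v := by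
      intro k
      rw [Matrix.mul_apply, Finset.sum_mul]
      exact Finset.sum_congr rfl fun i _ => by ring
    simp only [this, mulAJ hdet, Matrix.one_apply]
    simp [Finset.sum_ite_eq']
  rw [h3] at h2
  linarith

lemma jacobi (hΦ : ContDiff ℝ (⊤ : ℕ∞) Φ) (hdet : ∀ x, (jac Φ x).det = 1)
    (x v : Fin d → ℝ) :
    ∑ m, ∑ i, (jac Φ x)⁻¹ m i * fderiv ℝ (fderiv ℝ Φ) x v (Pi.single m 1) i = 0 := by
  classical
  set B := fderiv ℝ (fderiv ℝ Φ) x with hBdef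
  have hdet_fun : (fun y => (jac Φ y).det)
      = fun y => ∑ σ : Equiv.Perm (Fin d),
          (Equiv.Perm.sign σ : ℝ) * ∏ p, jac Φ y (σ p) p := by
    funext y; rw [Matrix.det_apply]
    simp [Units.smul_def, zsmul_eq_mul]
  have hL : HasFDerivAt (fun y => (jac Φ y).det)
      (∑ σ : Equiv.Perm (Fin d), (Equiv.Perm.sign σ : ℝ) •
        ∑ p, (∏ q ∈ Finset.univ.erase p, jac Φ x (σ q) q) •
          ((evalCLM (σ p) p).comp B)) x := by
    rw [hdet_fun]
    apply HasFDerivAt.fun_sum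
    intro σ _
    exact (HasFDerivAt.finset_prod (u := Finset.univ)
      (g := fun p y => jac Φ y (σ p) p)
      (g' := fun p => (evalCLM (σ p) p).comp B)
      (fun p _ => hasFDerivAt_entry hΦ x (σ p) p)).const_mul _
  have h0 : HasFDerivAt (fun y => (jac Φ y).det) (0 : (Fin d → ℝ) →L[ℝ] ℝ) x := by
    have hc : (fun y => (jac Φ y).det) = fun _ => (1 : ℝ) := funext hdet
    rw [hc]; exact hasFDerivAt_const _ _
  have hv := congrFun (congrArg DFunLike.coe (h0.unique hL)) v
  simp only [ContinuousLinearMap.zero_apply, ContinuousLinearMap.sum_apply,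
    ContinuousLinearMap.smul_apply, ContinuousLinearMap.comp_apply, smul_eq_mul] at hv
  -- hv : 0 = ∑ σ, sign σ * ∑ p, (∏ q ∈ erase p, jac (σ q) q) * B v (single p 1) (σ p)
  have key : ∑ m, ∑ i, (jac Φ x)⁻¹ m i * B v (Pi.single m 1) i
      = ∑ σ : Equiv.Perm (Fin d), (Equiv.Perm.sign σ : ℝ) *
          ∑ p, (∏ q ∈ Finset.univ.erase p, jac Φ x (σ q) q) *
            evalCLM (σ p) p (B v) := by
    have step1 : ∀ m, ∑ i, (jac Φ x)⁻¹ m i * B v (Pi.single m 1) i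
        = Matrix.cramer (jac Φ x) (fun i => B v (Pi.single m 1) i) m := by
      intro m
      rw [Matrix.cramer_eq_adjugate_mulVec, ← inv_eq_adj hdet]
      simp [Matrix.mulVec, dotProduct]
    have step2 : ∀ m, Matrix.cramer (jac Φ x) (fun i => B v (Pi.single m 1) i) m
        = ∑ σ : Equiv.Perm (Fin d), (Equiv.Perm.sign σ : ℝ) *
            (B v (Pi.single m 1) (σ m) *
              ∏ q ∈ Finset.univ.erase m, jac Φ x (σ q) q) := by
      intro m
      rw [Matrix.cramer_apply, Matrix.det_apply]
      simp only [Units.smul_def, zsmul_eq_mul]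
      refine Finset.sum_congr rfl fun σ _ => ?_
      congr 1
      rw [← Finset.mul_prod_erase Finset.univ _ (Finset.mem_univ m)]
      congr 1
      · simp [Matrix.updateCol_apply]
      · refine Finset.prod_congr rfl fun q hq => ?_
        rw [Matrix.updateCol_apply, if_neg (Finset.ne_of_mem_erase hq)]
    simp only [step1, step2]
    rw [Finset.sum_comm]
    refine Finset.sum_congr rfl fun σ _ => ?_
    rw [Finset.mul_sum]
    refine Finset.sum_congr rfl fun p _ => ?_
    rw [evalCLM_apply]
    ring
  rw [key, ← hv]

lemma piola (hΦ : ContDiff ℝ (⊤ : ℕ∞) Φ) (hdet : ∀ x, (jac Φ x).det = 1)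
    (x : Fin d → ℝ) (j : Fin d) :
    ∑ m, fderiv ℝ (fun y => (jac Φ y)⁻¹ m j) x (Pi.single m 1) = 0 := by
  classical
  set B := fderiv ℝ (fderiv ℝ Φ) x with hBdef
  have hsymm : ∀ v w : Fin d → ℝ, B v w = B w v := by
    intro v w
    refine second_derivative_symmetric (f := Φ) (f' := fderiv ℝ Φ) (x := x)
      (fun y => ((hΦ.differentiable (by simp)) y).hasFDerivAt) ?_ v w
    exact (((hΦ.fderiv_right (m := (⊤ : ℕ∞)) (by simp)).differentiable (by simp)) x).hasFDerivAt
  simp only [da_formula hΦ hdet x, ← hBdef]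
  have : ∀ m i k : Fin d,
      (jac Φ x)⁻¹ m i * ((jac Φ x)⁻¹ k j * B (Pi.single m 1) (Pi.single k 1) i)
      = (jac Φ x)⁻¹ k j * ((jac Φ x)⁻¹ m i * B (Pi.single k 1) (Pi.single m 1) i) := by
    intro m i k
    rw [hsymm (Pi.single m 1) (Pi.single k 1)]
    ring
  simp only [this]
  rw [Finset.sum_neg_distrib, neg_eq_zero]
  have hswap : ∀ m : Fin d, ∑ i, ∑ k, (jac Φ x)⁻¹ k j *
      ((jac Φ x)⁻¹ m i * B (Pi.single k 1) (Pi.single m 1) i)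
      = ∑ k, ∑ i, (jac Φ x)⁻¹ k j *
      ((jac Φ x)⁻¹ m i * B (Pi.single k 1) (Pi.single m 1) i) :=
    fun m => Finset.sum_comm
  simp only [hswap]
  rw [Finset.sum_comm]
  simp only [← Finset.mul_sum]
  have jz : ∀ k : Fin d, ∑ m, ∑ i, (jac Φ x)⁻¹ m i *
      B (Pi.single k 1) (Pi.single m 1) i = 0 :=
    fun k => jacobi hΦ hdet x (Pi.single k 1)
  simp only [jz, mul_zero, Finset.sum_const_zero]

theorem statement8 (d : ℕ) (hd : 1 ≤ d)
    (Φ G : (Fin d → ℝ) → (Fin d → ℝ))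
    (hΦ : ContDiff ℝ (⊤ : ℕ∞) Φ) (hG : ContDiff ℝ (⊤ : ℕ∞) G)
    (hdet : ∀ x, (jac Φ x).det = 1) :
    ∀ x, divg d (fun y => (jac Φ y)⁻¹ *ᵥ G (Φ y)) x = divg d G (Φ x) := by
  intro x
  classical
  have hΦd := hΦ.differentiable (by simp)
  have hGd := hG.differentiable (by simp)
  set G' := fderiv ℝ G (Φ x) with hG'def
  set F'x := fderiv ℝ Φ x with hF'xdef
  have hGΦ : HasFDerivAt (fun y => G (Φ y)) (G'.comp F'x) x :=
    (hGd (Φ x)).hasFDerivAt.comp x (hΦd x).hasFDerivAt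
  have hgj : ∀ j : Fin d, HasFDerivAt (fun y => G (Φ y) j)
      ((ContinuousLinearMap.proj j).comp (G'.comp F'x)) x :=
    fun j => (ContinuousLinearMap.proj (R := ℝ) (φ := fun _ : Fin d => ℝ) j).hasFDerivAt.comp x hGΦ
  have hcomp : ∀ i : Fin d, (fun y => ((jac Φ y)⁻¹ *ᵥ G (Φ y)) i)
      = fun y => ∑ j, (jac Φ y)⁻¹ i j * G (Φ y) j := by
    intro i; funext y; simp [Matrix.mulVec, dotProduct]
  set D : Fin d → (Fin d → ℝ) →L[ℝ] ℝ := fun i =>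
    ∑ j, ((jac Φ x)⁻¹ i j • ((ContinuousLinearMap.proj j).comp (G'.comp F'x))
      + G (Φ x) j • fderiv ℝ (fun y => (jac Φ y)⁻¹ i j) x) with hDdef
  have hVi : ∀ i, HasFDerivAt (fun y => ((jac Φ y)⁻¹ *ᵥ G (Φ y)) i) (D i) x := by
    intro i
    rw [hcomp i]
    exact HasFDerivAt.fun_sum fun j _ =>
      ((differentiableAt_inv_entry hΦ hdet x i j).hasFDerivAt).fun_mul (hgj j)
  have hV : HasFDerivAt (fun y => (jac Φ y)⁻¹ *ᵥ G (Φ y)) (ContinuousLinearMap.pi D) x :=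
    hasFDerivAt_pi.2 hVi
  have hdivV : divg d (fun y => (jac Φ y)⁻¹ *ᵥ G (Φ y)) x = ∑ i, D i (Pi.single i 1) := by
    unfold divg
    rw [hV.fderiv]
    rfl
  rw [hdivV]
  have hD : ∀ i : Fin d, D i (Pi.single i 1)
      = ∑ j, ((jac Φ x)⁻¹ i j * (G' (F'x (Pi.single i 1)) j)
        + G (Φ x) j * fderiv ℝ (fun y => (jac Φ y)⁻¹ i j) x (Pi.single i 1)) := by
    intro i
    simp [hDdef, ContinuousLinearMap.sum_apply, ContinuousLinearMap.add_apply,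
      ContinuousLinearMap.smul_apply, smul_eq_mul]
  simp only [hD]
  simp only [Finset.sum_add_distrib]
  have hzero : ∑ i, ∑ j, G (Φ x) j *
      fderiv ℝ (fun y => (jac Φ y)⁻¹ i j) x (Pi.single i 1) = 0 := by
    rw [Finset.sum_comm]
    simp only [← Finset.mul_sum]
    simp [piola hΦ hdet x]
  rw [hzero, add_zero]
  have hFe : ∀ i : Fin d, F'x (Pi.single i 1) = ∑ k, jac Φ x k i • (Pi.single k 1 : Fin d → ℝ) := by
    intro i
    funext k'
    simp [jac, ← hF'xdef, Finset.sum_apply, Pi.single_apply, mul_ite, mul_one, mul_zero,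
      Finset.sum_ite_eq']
  have hGF : ∀ i j : Fin d, G' (F'x (Pi.single i 1)) j
      = ∑ k, jac Φ x k i * G' (Pi.single k 1) j := by
    intro i j
    rw [hFe i, map_sum]
    simp [Finset.sum_apply]
  simp only [hGF, Finset.mul_sum]
  rw [Finset.sum_comm]
  have hswap2 : ∀ j : Fin d, ∑ i, ∑ k,
      (jac Φ x)⁻¹ i j * (jac Φ x k i * G' (Pi.single k 1) j)
      = ∑ k, ∑ i, (jac Φ x)⁻¹ i j * (jac Φ x k i * G' (Pi.single k 1) j) :=
    fun j => Finset.sum_comm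
  simp only [hswap2]
  have hkey : ∀ j k : Fin d, ∑ i, (jac Φ x)⁻¹ i j * (jac Φ x k i * G' (Pi.single k 1) j)
      = (jac Φ x * (jac Φ x)⁻¹) k j * G' (Pi.single k 1) j := by
    intro j k
    rw [Matrix.mul_apply, Finset.sum_mul]
    exact Finset.sum_congr rfl fun i _ => by ring
  simp only [hkey, mulJA hdet, Matrix.one_apply]
  simp only [ite_mul, one_mul, zero_mul, Finset.sum_ite_eq', Finset.mem_univ, if_true]
  rfl
end

section
/- Let d ≥ 2 be an integer and r ∈ [1,∞). There exists a constant C = C(r,d) > 0 such that for all smooth ℤ^d-periodic functions a, f : ℝ^d → ℝ and every positive integer σ: ‖a(·) f(σ·)‖_{L^r([0,1]^d)} ≤ C · ( ‖a‖_{L^r([0,1]^d)} + σ^{−1/r} · ‖a‖_{C^1} ) · ‖f‖_{L^r([0,1]^d)}. -/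
open MeasureTheory

noncomputable section

/-- The unit cube `[0,1]^d`, fundamental domain of the torus `𝕋^d`. -/
def cube (d : ℕ) : Set (Fin d → ℝ) := Set.Icc 0 1

/-- `ℤ^d`-periodicity of a function on `ℝ^d`. -/
def ZPeriodic {d : ℕ} {F : Type*} (f : (Fin d → ℝ) → F) : Prop :=
  ∀ (x : Fin d → ℝ) (k : Fin d → ℤ), f (x + fun i => (k i : ℝ)) = f x

/-- the `C^n` norm `max_{|α| ≤ n} sup_x ‖∂^α f(x)‖` (via iterated Fréchet derivatives). -/
def CNorm {E F : Type*} [NormedAddCommGroup E] [NormedSpace ℝ E]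
    [NormedAddCommGroup F] [NormedSpace ℝ F] (n : ℕ) (f : E → F) : ℝ :=
  ⨆ (m : Fin (n + 1)) (x : E), ‖iteratedFDeriv ℝ (m : ℕ) f x‖

/-- the `L^r([0,1]^d)` norm. -/
def LpCube {F : Type*} [NormedAddCommGroup F] (d : ℕ) (r : ℝ)
    (f : (Fin d → ℝ) → F) : ℝ :=
  (∫ x in cube d, ‖f x‖ ^ r) ^ (1 / r)

/-- the `W^{m,r}(𝕋^d)` norm `Σ_{|α| ≤ m} ‖∂^α f‖_{L^r([0,1]^d)}`. -/
def WNorm {F : Type*} [NormedAddCommGroup F] [NormedSpace ℝ F]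
    (d m : ℕ) (r : ℝ) (f : (Fin d → ℝ) → F) : ℝ :=
  ∑ j ∈ Finset.range (m + 1),
    (∫ x in cube d, ‖iteratedFDeriv ℝ j f x‖ ^ r) ^ (1 / r)

/-- a measure-preserving diffeomorphism of the torus `𝕋^d`: a smooth diffeomorphism
of `ℝ^d` commuting with integer translations and with `|det DΦ| ≡ 1`. -/
def IsMPTorusDiffeo (d : ℕ) (Φ : (Fin d → ℝ) → (Fin d → ℝ)) : Prop :=
  ContDiff ℝ (⊤ : ℕ∞) Φ ∧
  (∃ Ψ : (Fin d → ℝ) → (Fin d → ℝ), ContDiff ℝ (⊤ : ℕ∞) Ψ ∧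
    Function.LeftInverse Ψ Φ ∧ Function.RightInverse Ψ Φ) ∧
  (∀ (x : Fin d → ℝ) (k : Fin d → ℤ),
    Φ (x + fun i => (k i : ℝ)) = Φ x + fun i => (k i : ℝ)) ∧
  (∀ x, |(jac Φ x).det| = 1)

end

noncomputable section St12Aux

open Set MeasureTheory Pointwise

namespace St12

variable {d : ℕ}

/-- the half-open unit cube. -/
def bigC (d : ℕ) : Set (Fin d → ℝ) := Set.pi Set.univ fun _ => Set.Ico (0:ℝ) 1

lemma mem_bigC {x : Fin d → ℝ} : x ∈ bigC d ↔ ∀ i, 0 ≤ x i ∧ x i < 1 := by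
  simp [bigC, Set.mem_pi]

lemma bigC_meas : MeasurableSet (bigC d) :=
  MeasurableSet.univ_pi fun _ => measurableSet_Ico

lemma bigC_sub : bigC d ⊆ Set.Icc 0 1 := by
  rw [← Set.pi_univ_Icc]
  exact Set.pi_mono fun i _ => by simpa using Set.Ico_subset_Icc_self

lemma vol_bigC : volume (bigC d) = 1 := by
  rw [bigC, volume_pi_pi]; simp [Real.volume_Ico]

lemma vol_Icc : volume (Set.Icc (0 : Fin d → ℝ) 1) = 1 := by
  rw [← Set.pi_univ_Icc, volume_pi_pi]; simp [Real.volume_Icc]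

lemma Icc_ae_bigC : (Set.Icc (0 : Fin d → ℝ) 1 : Set (Fin d → ℝ)) =ᵐ[volume] bigC d := by
  rw [MeasureTheory.ae_eq_set]
  constructor
  · have h := measure_diff (bigC_sub (d := d)) bigC_meas.nullMeasurableSet
      (by rw [vol_bigC]; exact ENNReal.one_ne_top)
    rw [h, vol_bigC, vol_Icc, tsub_self]
  · rw [Set.diff_eq_empty.mpr bigC_sub, measure_empty]

lemma integral_Icc_eq_bigC (g : (Fin d → ℝ) → ℝ) :
    ∫ x in Set.Icc (0:Fin d → ℝ) 1, g x = ∫ x in bigC d, g x :=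
  setIntegral_congr_set Icc_ae_bigC

lemma integrableOn_of_cont {g : (Fin d → ℝ) → ℝ} (hg : Continuous g)
    {S : Set (Fin d → ℝ)} (hS : S ⊆ Set.Icc 0 1) : IntegrableOn g S volume :=
  (hg.continuousOn.integrableOn_compact isCompact_Icc).mono_set hS

variable (σ : ℕ)

/-- integer-vector cast of a multi-index. -/
def ktil (k : Fin d → Fin σ) : Fin d → ℝ := fun i => ((k i : ℕ) : ℝ)

/-- the small subcube indexed by `k`. -/
def smallC (k : Fin d → Fin σ) : Set (Fin d → ℝ) :=
  Set.pi Set.univ fun i => Set.Ico (((k i : ℕ) : ℝ) / σ) ((((k i : ℕ) : ℝ) + 1) / σ)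

lemma mem_smallC (hσ : 0 < σ) {k : Fin d → Fin σ} {y : Fin d → ℝ} :
    y ∈ smallC σ k ↔ ∀ i, ((k i : ℕ) : ℝ) ≤ σ * y i ∧ σ * y i < ((k i : ℕ) : ℝ) + 1 := by
  have hσR : (0:ℝ) < σ := by exact_mod_cast hσ
  simp only [smallC, Set.mem_pi, Set.mem_univ, forall_true_left, Set.mem_Ico]
  refine forall_congr' fun i => ?_
  rw [div_le_iff₀ hσR, lt_div_iff₀ hσR, mul_comm (y i) (σ:ℝ)]

lemma smallC_meas (k : Fin d → Fin σ) : MeasurableSet (smallC σ k) :=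
  MeasurableSet.univ_pi fun _ => measurableSet_Ico

lemma smallC_sub (hσ : 0 < σ) (k : Fin d → Fin σ) : smallC σ k ⊆ bigC d := by
  intro y hy
  rw [mem_smallC σ hσ] at hy
  rw [mem_bigC]
  intro i
  have hσR : (0:ℝ) < σ := by exact_mod_cast hσ
  have h1 : ((k i : ℕ) : ℝ) ≤ σ * y i := (hy i).1
  have h2 : σ * y i < ((k i : ℕ) : ℝ) + 1 := (hy i).2
  have h3 : ((k i : ℕ) : ℝ) + 1 ≤ σ := by
    have : (k i : ℕ) + 1 ≤ σ := (k i).2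
    exact_mod_cast this
  constructor
  · nlinarith [Nat.cast_nonneg (α := ℝ) (k i : ℕ)]
  · nlinarith

lemma smallC_eq (hσ : 0 < σ) (k : Fin d → Fin σ) :
    smallC σ k = ((σ:ℝ))⁻¹ • ((fun x => x - ktil σ k) ⁻¹' bigC d) := by
  have hσR : (0:ℝ) < σ := by exact_mod_cast hσ
  ext y
  rw [Set.mem_inv_smul_set_iff₀ hσR.ne', Set.mem_preimage, mem_bigC, mem_smallC σ hσ]
  refine forall_congr' fun i => ?_
  have : ((σ:ℝ) • y - ktil σ k) i = σ * y i - ((k i : ℕ) : ℝ) := by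
    simp [ktil, Pi.smul_apply, smul_eq_mul]
  rw [this]
  constructor <;> rintro ⟨h1, h2⟩ <;> constructor <;> linarith

lemma preimage_add_ktil (k : Fin d → Fin σ) :
    (fun z => z + ktil σ k) ⁻¹' ((fun x => x - ktil σ k) ⁻¹' bigC d) = bigC d := by
  ext z; simp [add_sub_cancel_right]

lemma integral_smallC (hσ : 0 < σ) (k : Fin d → Fin σ) (G : (Fin d → ℝ) → ℝ) :
    ∫ y in smallC σ k, G y
      = ((σ:ℝ) ^ d)⁻¹ * ∫ z in bigC d, G ((σ:ℝ)⁻¹ • (z + ktil σ k)) := by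
  have hσR : (0:ℝ) < σ := by exact_mod_cast hσ
  set T : Set (Fin d → ℝ) := (fun x => x - ktil σ k) ⁻¹' bigC d with hT
  have hfr : Module.finrank ℝ (Fin d → ℝ) = d := by simp [Module.finrank_pi]
  have h1 := Measure.setIntegral_comp_smul_of_pos volume G T (inv_pos.2 hσR)
  rw [hfr] at h1
  have h2 := (measurePreserving_add_right volume (ktil σ k)).setIntegral_preimage_emb
    (MeasurableEquiv.addRight (ktil σ k)).measurableEmbedding
    (fun x => G ((σ:ℝ)⁻¹ • x)) T
  rw [hT, preimage_add_ktil] at h2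
  have h3 : ∫ z in bigC d, G ((σ:ℝ)⁻¹ • (z + ktil σ k))
      = ((σ:ℝ)^d) * ∫ x in (σ:ℝ)⁻¹ • T, G x := by
    calc ∫ z in bigC d, G ((σ:ℝ)⁻¹ • (z + ktil σ k)) = ∫ x in T, G ((σ:ℝ)⁻¹ • x) := h2
      _ = (((σ:ℝ)⁻¹ ^ d)⁻¹) • ∫ x in (σ:ℝ)⁻¹ • T, G x := h1
      _ = ((σ:ℝ)^d) * ∫ x in (σ:ℝ)⁻¹ • T, G x := by
          rw [smul_eq_mul, inv_pow, inv_inv]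
  rw [smallC_eq σ hσ k, ← hT, h3, ← mul_assoc,
    inv_mul_cancel₀ (pow_ne_zero d hσR.ne'), one_mul]

lemma cover (hσ : 0 < σ) : (⋃ k : Fin d → Fin σ, smallC σ k) = bigC d := by
  have hσR : (0:ℝ) < σ := by exact_mod_cast hσ
  apply Set.Subset.antisymm
  · exact Set.iUnion_subset fun k => smallC_sub σ hσ k
  · intro x hx
    rw [mem_bigC] at hx
    have hk : ∀ i, ⌊(σ:ℝ) * x i⌋₊ < σ := by
      intro i
      rw [Nat.floor_lt (by nlinarith [(hx i).1])]
      nlinarith [(hx i).2]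
    refine Set.mem_iUnion.2 ⟨fun i => ⟨⌊(σ:ℝ) * x i⌋₊, hk i⟩, ?_⟩
    rw [mem_smallC σ hσ]
    intro i
    exact ⟨Nat.floor_le (by nlinarith [(hx i).1]), Nat.lt_floor_add_one _⟩

lemma disj (hσ : 0 < σ) : Pairwise (Function.onFun Disjoint (smallC (d := d) σ)) := by
  intro k k' hkk'
  rw [Function.onFun, Set.disjoint_left]
  intro y hy hy'
  apply hkk'
  funext i
  rw [mem_smallC σ hσ] at hy hy'
  have h1 := (hy i).1; have h2 := (hy i).2
  have h3 := (hy' i).1; have h4 := (hy' i).2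
  have e1 : ((k i : ℕ) : ℝ) < ((k' i : ℕ) : ℝ) + 1 := by linarith
  have e2 : ((k' i : ℕ) : ℝ) < ((k i : ℕ) : ℝ) + 1 := by linarith
  have e1' : (k i : ℕ) ≤ (k' i : ℕ) := by exact_mod_cast Nat.lt_add_one_iff.mp (by exact_mod_cast e1)
  have e2' : (k' i : ℕ) ≤ (k i : ℕ) := by exact_mod_cast Nat.lt_add_one_iff.mp (by exact_mod_cast e2)
  exact Fin.ext (le_antisymm e1' e2')

lemma tiling (hσ : 0 < σ) (g : (Fin d → ℝ) → ℝ)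
    (hg : ∀ k : Fin d → Fin σ, IntegrableOn g (smallC σ k) volume) :
    ∑ k : Fin d → Fin σ, ∫ y in smallC σ k, g y = ∫ y in bigC d, g y := by
  rw [← cover σ hσ]
  have h := integral_biUnion_finset (μ := volume) (f := g) (Finset.univ : Finset (Fin d → Fin σ))
    (fun k _ => smallC_meas σ k)
    (fun k _ k' _ hkk' => disj σ hσ hkk')
    (fun k _ => hg k)
  rw [← h]
  congr 1
  simp

/-- `(u+v)^r ≤ 2^r (u^r + v^r)` for nonnegative reals. -/
lemma rpow_add_le (u v r : ℝ) (hu : 0 ≤ u) (hv : 0 ≤ v) (hr : 0 ≤ r) :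
    (u + v) ^ r ≤ 2 ^ r * (u ^ r + v ^ r) := by
  have h1 : u + v ≤ 2 * max u v := by
    rcases le_total u v with h | h
    · rw [max_eq_right h]; linarith
    · rw [max_eq_left h]; linarith
  calc (u + v) ^ r ≤ (2 * max u v) ^ r := Real.rpow_le_rpow (by linarith) h1 hr
    _ = 2 ^ r * (max u v) ^ r := Real.mul_rpow (by norm_num) (le_max_iff.2 (Or.inl hu))
    _ ≤ 2 ^ r * (u ^ r + v ^ r) := by
        gcongr
        rcases le_total u v with h | h
        · rw [max_eq_right h]; nlinarith [Real.rpow_nonneg hu r]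
        · rw [max_eq_left h]; nlinarith [Real.rpow_nonneg hv r]

/-- subadditivity of `x ↦ x^p` for `p ≤ 1`. -/
lemma rpow_subadd {x y p : ℝ} (hx : 0 ≤ x) (hy : 0 ≤ y) (hp : 0 ≤ p) (hp1 : p ≤ 1) :
    (x + y) ^ p ≤ x ^ p + y ^ p := by
  have h := NNReal.rpow_add_le_add_rpow x.toNNReal y.toNNReal hp hp1
  have hc : ((x.toNNReal + y.toNNReal : NNReal) : ℝ) = x + y := by
    push_cast [Real.coe_toNNReal _ hx, Real.coe_toNNReal _ hy]; ring
  calc (x + y) ^ p = (((x.toNNReal + y.toNNReal : NNReal) : ℝ)) ^ p := by rw [hc]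
    _ = (((x.toNNReal + y.toNNReal) ^ p : NNReal) : ℝ) := by rw [NNReal.coe_rpow]
    _ ≤ ((x.toNNReal ^ p + y.toNNReal ^ p : NNReal) : ℝ) := by exact_mod_cast h
    _ = x ^ p + y ^ p := by
        push_cast [NNReal.coe_rpow, Real.coe_toNNReal _ hx, Real.coe_toNNReal _ hy]; ring

end St12

end St12Aux

set_option maxHeartbeats 1000000 in
theorem statement12 (d : ℕ) (hd : 2 ≤ d) (r : ℝ) (hr : 1 ≤ r) :
    ∃ C : ℝ, 0 < C ∧ ∀ (a f : (Fin d → ℝ) → ℝ) (σ : ℕ), 0 < σ →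
      ContDiff ℝ (⊤ : ℕ∞) a → ZPeriodic a → ContDiff ℝ (⊤ : ℕ∞) f → ZPeriodic f →
      LpCube d r (fun x => a x * f ((σ : ℝ) • x))
        ≤ C * (LpCube d r a + (σ : ℝ) ^ (-(1 / r)) * CNorm 1 a) * LpCube d r f := by
  classical
  refine ⟨2, by norm_num, ?_⟩
  intro a f σ hσ hca hZa hcf hZf
  have hσR : (0:ℝ) < σ := by exact_mod_cast hσ
  have hσ1 : (1:ℝ) ≤ σ := by exact_mod_cast hσ
  have hr0 : (0:ℝ) < r := lt_of_lt_of_le one_pos hr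
  have hr0' : (0:ℝ) ≤ r := hr0.le
  -- the Lipschitz constant of `a`
  set L : ℝ := ⨆ x : Fin d → ℝ, ‖iteratedFDeriv ℝ 1 a x‖ with hLdef
  have hnorm1 : ∀ x, ‖iteratedFDeriv ℝ 1 a x‖ = ‖fderiv ℝ a x‖ := by
    intro x; rw [← norm_iteratedFDeriv_fderiv, norm_iteratedFDeriv_zero]
  have hfper : ∀ (x : Fin d → ℝ) (kk : Fin d → ℤ),
      fderiv ℝ a (x + fun i => ((kk i : ℝ))) = fderiv ℝ a x := by
    intro x kk
    set v : Fin d → ℝ := fun i => ((kk i : ℝ)) with hv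
    have hper : (fun y => a (y + v)) = a := funext fun y => hZa y kk
    conv_rhs => rw [← hper]
    have h1 : (fun y => a (y + v)) = a ∘ (fun y => y + v) := rfl
    rw [h1, fderiv_comp x (hca.differentiable (by simp) _) (differentiableAt_fun_id.add_const v)]
    have h2 : fderiv ℝ (fun y : Fin d → ℝ => y + v) x = ContinuousLinearMap.id ℝ _ := by
      rw [fderiv_add_const, fderiv_id']
    rw [h2, ContinuousLinearMap.comp_id]
  obtain ⟨B, hB⟩ := (isCompact_Icc (a := (0 : Fin d → ℝ)) (b := 1)).exists_bound_of_continuousOn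
    ((hca.continuous_fderiv (by simp)).norm.continuousOn)
  have hBall : ∀ x, ‖fderiv ℝ a x‖ ≤ B := by
    intro x
    set y : Fin d → ℝ := fun i => x i - ⌊x i⌋ with hy
    have hxy : x = y + fun i => (((fun j => ⌊x j⌋) i : ℤ) : ℝ) := by
      funext i; simp [hy]
    have hyIcc : y ∈ Set.Icc (0 : Fin d → ℝ) 1 := by
      rw [Set.mem_Icc]
      constructor <;> intro i
      · have := Int.fract_nonneg (x i); rw [Int.fract] at this
        simpa [hy] using this
      · have := Int.fract_lt_one (x i); rw [Int.fract] at this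
        simp only [hy, Pi.one_apply]
        linarith
    have hval : ‖fderiv ℝ a x‖ = ‖fderiv ℝ a y‖ := by
      conv_lhs => rw [hxy, hfper]
    rw [hval]
    have := hB y hyIcc
    rwa [norm_norm] at this
  have hbdd : BddAbove (Set.range fun x : Fin d → ℝ => ‖iteratedFDeriv ℝ 1 a x‖) := by
    refine ⟨B, ?_⟩; rintro _ ⟨x, rfl⟩
    show ‖iteratedFDeriv ℝ 1 a x‖ ≤ B
    rw [hnorm1]; exact hBall x
  have hL0 : 0 ≤ L := Real.iSup_nonneg fun x => norm_nonneg _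
  have hfdL : ∀ x, ‖fderiv ℝ a x‖ ≤ L := fun x => by
    rw [← hnorm1]; exact le_ciSup hbdd x
  have hLC : L ≤ CNorm 1 a := by
    have h := le_ciSup (f := fun m : Fin 2 => ⨆ x : Fin d → ℝ, ‖iteratedFDeriv ℝ (m : ℕ) a x‖)
      (Set.Finite.bddAbove (Set.finite_range _)) (1 : Fin 2)
    simpa [CNorm, hLdef] using h
  have hLipa : ∀ x y : Fin d → ℝ, |a x - a y| ≤ L * ‖x - y‖ := by
    intro x y
    have h := convex_univ.norm_image_sub_le_of_norm_fderiv_le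
      (fun z _ => hca.differentiable (by simp) z) (fun z _ => hfdL z)
      (Set.mem_univ y) (Set.mem_univ x)
    simpa [Real.norm_eq_abs] using h
  -- the error constant
  set c : ℝ := L * (σ:ℝ)⁻¹ with hcdef
  have hc0 : 0 ≤ c := mul_nonneg hL0 (inv_nonneg.2 hσR.le)
  -- Lipschitz comparison between points of a common small cube
  have hLip2 : ∀ (k : Fin d → Fin σ) (z z' : Fin d → ℝ), z ∈ St12.bigC d → z' ∈ St12.bigC d →
      |a ((σ:ℝ)⁻¹ • (z + St12.ktil σ k))| ≤ |a ((σ:ℝ)⁻¹ • (z' + St12.ktil σ k))| + c := by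
    intro k z z' hz hz'
    have hdiff : (σ:ℝ)⁻¹ • (z + St12.ktil σ k) - (σ:ℝ)⁻¹ • (z' + St12.ktil σ k)
        = (σ:ℝ)⁻¹ • (z - z') := by
      rw [← smul_sub, add_sub_add_right_eq_sub]
    have hz1 : ‖z - z'‖ ≤ 1 := by
      rw [pi_norm_le_iff_of_nonneg zero_le_one]
      intro i
      rw [St12.mem_bigC] at hz hz'
      rw [Real.norm_eq_abs, Pi.sub_apply, abs_le]
      constructor <;> linarith [(hz i).1, (hz i).2, (hz' i).1, (hz' i).2]
    have hnd : ‖(σ:ℝ)⁻¹ • (z + St12.ktil σ k) - (σ:ℝ)⁻¹ • (z' + St12.ktil σ k)‖ ≤ (σ:ℝ)⁻¹ := by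
      rw [hdiff, norm_smul, Real.norm_eq_abs, abs_of_nonneg (inv_nonneg.2 hσR.le)]
      calc (σ:ℝ)⁻¹ * ‖z - z'‖ ≤ (σ:ℝ)⁻¹ * 1 :=
            mul_le_mul_of_nonneg_left hz1 (inv_nonneg.2 hσR.le)
        _ = (σ:ℝ)⁻¹ := mul_one _
    have h1 := abs_sub_abs_le_abs_sub (a ((σ:ℝ)⁻¹ • (z + St12.ktil σ k)))
      (a ((σ:ℝ)⁻¹ • (z' + St12.ktil σ k)))
    have h2 := hLipa ((σ:ℝ)⁻¹ • (z + St12.ktil σ k)) ((σ:ℝ)⁻¹ • (z' + St12.ktil σ k))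
    have h3 : L * ‖(σ:ℝ)⁻¹ • (z + St12.ktil σ k) - (σ:ℝ)⁻¹ • (z' + St12.ktil σ k)‖ ≤ c := by
      rw [hcdef]
      exact mul_le_mul_of_nonneg_left hnd hL0
    linarith
  -- names for the integrands
  set g0 : (Fin d → ℝ) → ℝ := fun x => ‖a x * f ((σ:ℝ) • x)‖ ^ r with hg0def
  have hcontg0 : Continuous g0 := ((hca.continuous.mul (hcf.continuous.comp
      (continuous_id.const_smul (σ:ℝ)))).norm).rpow_const (fun x => Or.inr hr0')
  set aa : (Fin d → ℝ) → ℝ := fun y => (|a y| + c) ^ r with haadef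
  have hcontaa : Continuous aa :=
    (hca.continuous.abs.add continuous_const).rpow_const (fun x => Or.inr hr0')
  set ar : (Fin d → ℝ) → ℝ := fun y => |a y| ^ r with hardef
  have hcontar : Continuous ar := hca.continuous.abs.rpow_const fun x => Or.inr hr0'
  set fr : (Fin d → ℝ) → ℝ := fun z => |f z| ^ r with hfrdef
  have hcontfr : Continuous fr := hcf.continuous.abs.rpow_const fun x => Or.inr hr0'
  have hcontφ : ∀ k : Fin d → Fin σ,
      Continuous (fun z : Fin d → ℝ => (σ:ℝ)⁻¹ • (z + St12.ktil σ k)) := fun k =>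
    by fun_prop
  set P : ℝ := ∫ y in St12.bigC d, ar y with hPdef
  set R : ℝ := ∫ z in St12.bigC d, fr z with hRdef
  set M : ℝ := ∫ y in St12.bigC d, aa y with hMdef
  have hP0 : 0 ≤ P := setIntegral_nonneg St12.bigC_meas
    fun _ _ => Real.rpow_nonneg (abs_nonneg _) r
  have hR0 : 0 ≤ R := setIntegral_nonneg St12.bigC_meas
    fun _ _ => Real.rpow_nonneg (abs_nonneg _) r
  -- periodicity of f
  have hfk : ∀ (k : Fin d → Fin σ) (z : Fin d → ℝ),
      f ((σ:ℝ) • ((σ:ℝ)⁻¹ • (z + St12.ktil σ k))) = f z := by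
    intro k z
    rw [smul_inv_smul₀ hσR.ne']
    have hk : St12.ktil σ k = fun i => (((k i : ℕ) : ℤ) : ℝ) := by
      funext i; simp [St12.ktil]
    rw [hk]
    exact hZf z (fun i => ((k i : ℕ) : ℤ))
  have hg0φ : ∀ (k : Fin d → Fin σ) (z : Fin d → ℝ),
      g0 ((σ:ℝ)⁻¹ • (z + St12.ktil σ k))
        = |a ((σ:ℝ)⁻¹ • (z + St12.ktil σ k))| ^ r * fr z := by
    intro k z
    show ‖a ((σ:ℝ)⁻¹ • (z + St12.ktil σ k)) * f ((σ:ℝ) • ((σ:ℝ)⁻¹ • (z + St12.ktil σ k)))‖ ^ r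
      = |a ((σ:ℝ)⁻¹ • (z + St12.ktil σ k))| ^ r * |f z| ^ r
    rw [hfk k z, Real.norm_eq_abs, abs_mul, Real.mul_rpow (abs_nonneg _) (abs_nonneg _)]
  -- integrability facts
  have hint : ∀ {g : (Fin d → ℝ) → ℝ}, Continuous g → IntegrableOn g (St12.bigC d) volume :=
    fun hg => St12.integrableOn_of_cont hg St12.bigC_sub
  have hintsmall : ∀ {g : (Fin d → ℝ) → ℝ}, Continuous g →
      ∀ k : Fin d → Fin σ, IntegrableOn g (St12.smallC σ k) volume :=
    fun hg k => St12.integrableOn_of_cont hg ((St12.smallC_sub σ hσ k).trans St12.bigC_sub)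
  have hconst_int : IntegrableOn (fun _ : Fin d → ℝ => c ^ r) (St12.bigC d) volume :=
    hint continuous_const
  -- the main estimate: ∫ g0 ≤ M * R
  have claimB : ∀ z ∈ St12.bigC d,
      ∑ k : Fin d → Fin σ, ((σ:ℝ)^d)⁻¹ * |a ((σ:ℝ)⁻¹ • (z + St12.ktil σ k))| ^ r ≤ M := by
    intro z hz
    have perk : ∀ k : Fin d → Fin σ,
        ((σ:ℝ)^d)⁻¹ * |a ((σ:ℝ)⁻¹ • (z + St12.ktil σ k))| ^ r
          ≤ ∫ y in St12.smallC σ k, aa y := by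
      intro k
      rw [St12.integral_smallC σ hσ k aa]
      refine mul_le_mul_of_nonneg_left ?_ (inv_nonneg.2 (pow_nonneg hσR.le d))
      have hconst : |a ((σ:ℝ)⁻¹ • (z + St12.ktil σ k))| ^ r
          = ∫ _ in St12.bigC d, |a ((σ:ℝ)⁻¹ • (z + St12.ktil σ k))| ^ r := by
        rw [setIntegral_const, measureReal_def, St12.vol_bigC]; simp
      rw [hconst]
      refine setIntegral_mono_on
        (integrableOn_const (by rw [St12.vol_bigC]; exact ENNReal.one_ne_top))
        (hint (hcontaa.comp (hcontφ k))) St12.bigC_meas ?_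
      intro z' hz'
      exact Real.rpow_le_rpow (abs_nonneg _) (hLip2 k z z' hz hz') hr0'
    calc ∑ k : Fin d → Fin σ, ((σ:ℝ)^d)⁻¹ * |a ((σ:ℝ)⁻¹ • (z + St12.ktil σ k))| ^ r
        ≤ ∑ k : Fin d → Fin σ, ∫ y in St12.smallC σ k, aa y :=
          Finset.sum_le_sum fun k _ => perk k
      _ = M := St12.tiling σ hσ aa (fun k => hintsmall hcontaa k)
  have hIle : ∫ x in St12.bigC d, g0 x ≤ M * R := by
    have step2 : ∫ x in St12.bigC d, g0 x = ∑ k : Fin d → Fin σ, ∫ y in St12.smallC σ k, g0 y :=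
      (St12.tiling σ hσ g0 (fun k => hintsmall hcontg0 k)).symm
    have step3 : ∀ k : Fin d → Fin σ, ∫ y in St12.smallC σ k, g0 y
        = ∫ z in St12.bigC d,
            ((σ:ℝ)^d)⁻¹ * (|a ((σ:ℝ)⁻¹ • (z + St12.ktil σ k))| ^ r * fr z) := by
      intro k
      rw [St12.integral_smallC σ hσ k g0, ← integral_const_mul]
      refine setIntegral_congr_fun St12.bigC_meas ?_
      intro z _
      simp only [hg0φ k z]
    have hintk : ∀ k : Fin d → Fin σ, IntegrableOn
        (fun z => ((σ:ℝ)^d)⁻¹ * (|a ((σ:ℝ)⁻¹ • (z + St12.ktil σ k))| ^ r * fr z))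
        (St12.bigC d) volume := by
      intro k
      exact (hint (((hca.continuous.abs.comp (hcontφ k)).rpow_const
        (fun x => Or.inr hr0')).mul hcontfr)).const_mul _
    have step4 : ∫ x in St12.bigC d, g0 x
        = ∫ z in St12.bigC d, ∑ k : Fin d → Fin σ,
            ((σ:ℝ)^d)⁻¹ * (|a ((σ:ℝ)⁻¹ • (z + St12.ktil σ k))| ^ r * fr z) := by
      rw [step2]
      exact (Finset.sum_congr rfl fun k _ => step3 k).trans
        (integral_finset_sum Finset.univ (fun k _ => hintk k)).symm
    rw [step4]
    have hintsum : IntegrableOn (fun z => ∑ k : Fin d → Fin σ,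
        ((σ:ℝ)^d)⁻¹ * (|a ((σ:ℝ)⁻¹ • (z + St12.ktil σ k))| ^ r * fr z))
        (St12.bigC d) volume := integrable_finset_sum _ (fun k _ => hintk k)
    have hintMfr : IntegrableOn (fun z => M * fr z) (St12.bigC d) volume :=
      (hint hcontfr).const_mul _
    have hmono : ∀ z ∈ St12.bigC d, ∑ k : Fin d → Fin σ,
        ((σ:ℝ)^d)⁻¹ * (|a ((σ:ℝ)⁻¹ • (z + St12.ktil σ k))| ^ r * fr z) ≤ M * fr z := by
      intro z hz
      have e1 : ∑ k : Fin d → Fin σ,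
          ((σ:ℝ)^d)⁻¹ * (|a ((σ:ℝ)⁻¹ • (z + St12.ktil σ k))| ^ r * fr z)
            = (∑ k : Fin d → Fin σ, ((σ:ℝ)^d)⁻¹ * |a ((σ:ℝ)⁻¹ • (z + St12.ktil σ k))| ^ r)
              * fr z := by
        rw [Finset.sum_mul]
        exact Finset.sum_congr rfl fun k _ => by ring
      rw [e1]
      exact mul_le_mul_of_nonneg_right (claimB z hz) (Real.rpow_nonneg (abs_nonneg _) r)
    calc ∫ z in St12.bigC d, ∑ k : Fin d → Fin σ,
          ((σ:ℝ)^d)⁻¹ * (|a ((σ:ℝ)⁻¹ • (z + St12.ktil σ k))| ^ r * fr z)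
        ≤ ∫ z in St12.bigC d, M * fr z := setIntegral_mono_on hintsum hintMfr St12.bigC_meas hmono
      _ = M * R := integral_const_mul M fr
  -- bound M
  have hMle : M ≤ 2 ^ r * (P + c ^ r) := by
    have h1 : M ≤ ∫ y in St12.bigC d, (2 ^ r * (ar y + c ^ r)) := by
      refine setIntegral_mono_on (hint hcontaa)
        (((hint hcontar).add hconst_int).const_mul _) St12.bigC_meas ?_
      intro y _
      exact St12.rpow_add_le (|a y|) c r (abs_nonneg _) hc0 hr0'
    have h2 : ∫ y in St12.bigC d, (2 ^ r * (ar y + c ^ r)) = 2 ^ r * (P + c ^ r) := by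
      rw [integral_const_mul, integral_add (hint hcontar) hconst_int, setIntegral_const,
        measureReal_def, St12.vol_bigC]
      simp [hPdef]
    linarith
  have hI0 : 0 ≤ ∫ x in St12.bigC d, g0 x := setIntegral_nonneg St12.bigC_meas
    fun x _ => Real.rpow_nonneg (norm_nonneg _) r
  have hIfin : ∫ x in St12.bigC d, g0 x ≤ 2 ^ r * (P + c ^ r) * R :=
    le_trans hIle (mul_le_mul_of_nonneg_right hMle hR0)
  -- convert LpCube to bigC integrals
  have hLHS : LpCube d r (fun x => a x * f ((σ:ℝ) • x)) = (∫ x in St12.bigC d, g0 x) ^ (1/r) := by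
    simp only [LpCube, cube]
    rw [St12.integral_Icc_eq_bigC]
  have hLpa : LpCube d r a = P ^ (1/r) := by
    simp only [LpCube, cube, hPdef, hardef, Real.norm_eq_abs]
    rw [St12.integral_Icc_eq_bigC]
  have hLpf : LpCube d r f = R ^ (1/r) := by
    simp only [LpCube, cube, hRdef, hfrdef, Real.norm_eq_abs]
    rw [St12.integral_Icc_eq_bigC]
  -- final computation
  have h2r : ((2:ℝ) ^ r) ^ (1/r) = 2 := by
    rw [← Real.rpow_mul (by norm_num), mul_one_div_cancel hr0.ne', Real.rpow_one]
  have hcr : (c ^ r) ^ (1/r) = c := by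
    rw [← Real.rpow_mul hc0, mul_one_div_cancel hr0.ne', Real.rpow_one]
  have hσinv : (σ:ℝ)⁻¹ ≤ (σ:ℝ) ^ (-(1/r)) := by
    rw [← Real.rpow_neg_one]
    apply Real.rpow_le_rpow_of_exponent_le hσ1
    have h1r : 1/r ≤ 1 := by rw [div_le_one hr0]; exact hr
    linarith
  have hcfin : c ≤ (σ:ℝ) ^ (-(1/r)) * CNorm 1 a := by
    calc c = L * (σ:ℝ)⁻¹ := hcdef
      _ ≤ L * (σ:ℝ) ^ (-(1/r)) := mul_le_mul_of_nonneg_left hσinv hL0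
      _ ≤ CNorm 1 a * (σ:ℝ) ^ (-(1/r)) :=
          mul_le_mul_of_nonneg_right hLC (Real.rpow_nonneg hσR.le _)
      _ = (σ:ℝ) ^ (-(1/r)) * CNorm 1 a := mul_comm _ _
  rw [hLHS, hLpa, hLpf]
  calc (∫ x in St12.bigC d, g0 x) ^ (1/r)
      ≤ (2 ^ r * (P + c ^ r) * R) ^ (1/r) :=
        Real.rpow_le_rpow hI0 hIfin (by positivity)
    _ = ((2:ℝ) ^ r) ^ (1/r) * (P + c ^ r) ^ (1/r) * R ^ (1/r) := by
        rw [Real.mul_rpow (by positivity) hR0,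
          Real.mul_rpow (by positivity) (by positivity)]
    _ = 2 * (P + c ^ r) ^ (1/r) * R ^ (1/r) := by rw [h2r]
    _ ≤ 2 * (P ^ (1/r) + c) * R ^ (1/r) := by
        have hsub : (P + c ^ r) ^ (1/r) ≤ P ^ (1/r) + (c ^ r) ^ (1/r) :=
          St12.rpow_subadd hP0 (by positivity) (by positivity)
            (by rw [div_le_one hr0]; exact hr)
        rw [hcr] at hsub
        have hRr : 0 ≤ R ^ (1/r) := Real.rpow_nonneg hR0 _
        nlinarith [hsub]
    _ ≤ 2 * (P ^ (1/r) + (σ:ℝ) ^ (-(1/r)) * CNorm 1 a) * R ^ (1/r) := by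
        have hRr : 0 ≤ R ^ (1/r) := Real.rpow_nonneg hR0 _
        nlinarith [hcfin]
end
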